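/- arXiv:1306.5505 — 4 statements merged into one kernel-verified Lean document; each statement's English description precedes it below -/
import Mathlib

section
/- Under the fixed-design Gaussian linear model with a model-selection procedure Ŝ and the Select+mLS estimator β̃ with threshold τ > 0, the squared bias satisfies ‖E[β̃(Y)] − β*‖₂² ≤ 2·P(Ŝ ≠ S)·[ (σ²/n)·tr(C₁₁⁻¹) + ‖β*‖₂² + (1/τ²)·(1/n)‖Xβ*‖₂² + σ²/τ² ]. -/
open Matrix MeasureTheory ProbabilityTheory
open scoped NNReal

/-!
On the event `{Ŝ = S}` the Select+mLS estimator coincides with the oracle least-squares estimator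
`β̂ = β* + (X_SᵀX_S)⁻¹X_Sᵀε` (padded by zeros), which is unbiased. Hence the bias
`E[β̃ - β̂]` is the mean of a vector vanishing off `{Ŝ ≠ S}`, and Cauchy–Schwarz bounds its squared
norm by `P(Ŝ ≠ S) · E‖β̃ - β̂‖² ≤ 2 P(Ŝ ≠ S) (E‖β̃‖² + E‖β̂‖²)`. The thresholding bound gives
`E‖β̃‖² ≤ E‖Y‖² / (nτ²) = (‖Xβ*‖² + nσ²) / (nτ²)`, and the white-noise computation
`E‖Aε‖² = σ² tr(AAᵀ)` gives `E‖β̂‖² = ‖β*‖² + σ² tr((X_SᵀX_S)⁻¹)`.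
-/

theorem Fin.sum_castLE_eq_sum_of_eq_zero {M : Type*} [AddCommMonoid M] {s p : ℕ} (h : s ≤ p)
    {f : Fin p → M} (hf : ∀ j : Fin p, s ≤ (j : ℕ) → f j = 0) :
    ∑ k : Fin s, f (Fin.castLE h k) = ∑ j, f j :=
  Fintype.sum_of_injective _ (Fin.castLE_injective h) _ _
    (fun j hj => hf j (by by_contra! hjs; exact hj ⟨⟨j, hjs⟩, rfl⟩)) fun _ => rfl

namespace Matrix

variable {ι R : Type*}

def extendRowsByZero {s p : ℕ} [Zero R] (M : Matrix (Fin s) ι R) : Matrix (Fin p) ι R :=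
  of fun j i => if hj : (j : ℕ) < s then M ⟨j, hj⟩ i else 0

section

variable [Zero R] {s p : ℕ} (M : Matrix (Fin s) ι R)

@[simp]
theorem extendRowsByZero_castLE (h : s ≤ p) (k : Fin s) :
    (extendRowsByZero M : Matrix (Fin p) ι R) (Fin.castLE h k) = M k := by
  ext i; simp [extendRowsByZero]

theorem extendRowsByZero_of_le {j : Fin p} (hj : s ≤ (j : ℕ)) :
    (extendRowsByZero M : Matrix (Fin p) ι R) j = 0 := by
  ext i; simp [extendRowsByZero, hj.not_gt]

end

theorem trace_extendRowsByZero_mul_transpose [Fintype ι] [CommRing R] {s p : ℕ} (h : s ≤ p)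
    (M : Matrix (Fin s) ι R) :
    ((extendRowsByZero M : Matrix (Fin p) ι R) * (extendRowsByZero M)ᵀ).trace
      = (M * Mᵀ).trace := by
  simp only [trace, diag, mul_apply, transpose_apply]
  rw [← Fin.sum_castLE_eq_sum_of_eq_zero h fun j hj => by simp [extendRowsByZero_of_le M hj]]
  simp

theorem mulVec_eq_mulVec_comp_castLE [Fintype ι] [NonUnitalNonAssocSemiring R] {s p : ℕ}
    (h : s ≤ p) {X : Matrix ι (Fin p) R} {XS : Matrix ι (Fin s) R}
    (hXS : ∀ i k, XS i k = X i (Fin.castLE h k))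
    {β : Fin p → R} (hβ : ∀ j : Fin p, s ≤ (j : ℕ) → β j = 0) :
    X *ᵥ β = XS *ᵥ (β ∘ Fin.castLE h) := by
  ext i
  simp only [mulVec, dotProduct, hXS, Function.comp_apply]
  exact (Fin.sum_castLE_eq_sum_of_eq_zero h fun j hj => by simp [hβ j hj]).symm

variable {m n : Type*} [Fintype m] [Fintype n] [DecidableEq n] {A : Matrix m n ℝ}

theorem inv_transpose_mul_self_mulVec_transpose_mulVec_add (hA : IsUnit (Aᵀ * A).det)
    (b : n → ℝ) (e : m → ℝ) :
    (Aᵀ * A)⁻¹ *ᵥ (Aᵀ *ᵥ (A *ᵥ b + e)) = b + ((Aᵀ * A)⁻¹ * Aᵀ) *ᵥ e := by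
  rw [mulVec_add, mulVec_add, mulVec_mulVec, mulVec_mulVec, Matrix.mul_assoc, nonsing_inv_mul _ hA,
    one_mulVec, mulVec_mulVec]

theorem inv_transpose_mul_self_mul_transpose_mul_transpose (hA : IsUnit (Aᵀ * A).det) :
    (Aᵀ * A)⁻¹ * Aᵀ * ((Aᵀ * A)⁻¹ * Aᵀ)ᵀ = (Aᵀ * A)⁻¹ := by
  rw [transpose_mul, transpose_transpose, transpose_nonsing_inv, transpose_mul, transpose_transpose,
    Matrix.mul_assoc, ← Matrix.mul_assoc Aᵀ, mul_nonsing_inv _ hA, Matrix.mul_one]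

theorem trace_inv_smul {c : ℝ} (hc : c ≠ 0) {G : Matrix n n ℝ} (hG : IsUnit G.det) :
    ((c • G)⁻¹).trace = c⁻¹ * G⁻¹.trace := by
  have := invertibleOfNonzero hc
  rw [inv_smul _ _ hG, trace_smul, invOf_eq_inv, smul_eq_mul]

end Matrix

section CauchySchwarz

variable {α ι : Type*} [MeasurableSpace α] {μ : Measure α}

theorem sq_integral_le_measureReal_mul_integral_sq [IsFiniteMeasure μ] {f : α → ℝ}
    (hf : MemLp f 2 μ) {t : Set α} (ht : ∀ x ∉ t, f x = 0) :
    (∫ x, f x ∂μ) ^ 2 ≤ μ.real t * ∫ x, f x ^ 2 ∂μ := by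
  have hsq_le : ∫ x in t, f x ^ 2 ∂μ ≤ ∫ x, f x ^ 2 ∂μ :=
    setIntegral_le_integral hf.integrable_sq (ae_of_all _ fun x => sq_nonneg _)
  rw [← setIntegral_eq_integral_of_forall_compl_eq_zero ht]
  rcases eq_or_ne (μ t) 0 with h0 | h0
  · simp [Measure.restrict_eq_zero.mpr h0, measureReal_def, h0]
  have hpos : 0 < μ.real t := ENNReal.toReal_pos h0 (measure_ne_top μ t)
  have hJensen := even_two.convexOn_pow.map_set_average_le (by fun_prop) isClosed_univ h0
    (measure_ne_top μ t) (by simp) (hf.integrable one_le_two).integrableOn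
    hf.integrable_sq.integrableOn
  simp only [setAverage_eq, smul_eq_mul] at hJensen
  calc (∫ x in t, f x ∂μ) ^ 2 = μ.real t ^ 2 * ((μ.real t)⁻¹ * ∫ x in t, f x ∂μ) ^ 2 := by
        field_simp
    _ ≤ μ.real t ^ 2 * ((μ.real t)⁻¹ * ∫ x in t, f x ^ 2 ∂μ) := by gcongr
    _ = μ.real t * ∫ x in t, f x ^ 2 ∂μ := by field_simp
    _ ≤ μ.real t * ∫ x, f x ^ 2 ∂μ := by gcongr

theorem sum_sq_integral_sub_integral_le [Fintype ι] [IsFiniteMeasure μ] {U V : α → ι → ℝ}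
    (hU : ∀ j, MemLp (fun x => U x j) 2 μ) (hV : ∀ j, MemLp (fun x => V x j) 2 μ)
    {t : Set α} (hUV : ∀ x ∉ t, U x = V x) :
    ∑ j, (∫ x, U x j ∂μ - ∫ x, V x j ∂μ) ^ 2
      ≤ 2 * μ.real t * (∫ x, ∑ j, U x j ^ 2 ∂μ + ∫ x, ∑ j, V x j ^ 2 ∂μ) := by
  have hcoord : ∀ j, (∫ x, U x j ∂μ - ∫ x, V x j ∂μ) ^ 2
      ≤ 2 * μ.real t * (∫ x, U x j ^ 2 ∂μ + ∫ x, V x j ^ 2 ∂μ) := by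
    intro j
    have hUj := (hU j).integrable_sq
    have hVj := (hV j).integrable_sq
    rw [← integral_sub ((hU j).integrable one_le_two) ((hV j).integrable one_le_two)]
    calc (∫ x, U x j - V x j ∂μ) ^ 2 ≤ μ.real t * ∫ x, (U x j - V x j) ^ 2 ∂μ :=
          sq_integral_le_measureReal_mul_integral_sq ((hU j).sub (hV j))
            fun x hx => by simp [hUV x hx]
      _ ≤ μ.real t * ∫ x, 2 * (U x j ^ 2 + V x j ^ 2) ∂μ := by
          refine mul_le_mul_of_nonneg_left (integral_mono ((hU j).sub (hV j)).integrable_sq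
            ((hUj.add hVj).const_mul 2) fun x => ?_) measureReal_nonneg
          nlinarith [sq_nonneg (U x j + V x j)]
      _ = _ := by rw [integral_const_mul, integral_add hUj hVj]; ring
  calc _ ≤ ∑ j, 2 * μ.real t * (∫ x, U x j ^ 2 ∂μ + ∫ x, V x j ^ 2 ∂μ) :=
        Finset.sum_le_sum fun j _ => hcoord j
    _ = _ := by
      rw [← Finset.mul_sum, Finset.sum_add_distrib,
        integral_finsetSum _ fun j _ => (hU j).integrable_sq,
        integral_finsetSum _ fun j _ => (hV j).integrable_sq]

end CauchySchwarz

section WhiteNoise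

variable {Ω ι : Type*} [MeasurableSpace Ω] {P : Measure Ω}

structure IsWhiteNoise (ε : Ω → ι → ℝ) (P : Measure Ω) (v : ℝ) : Prop where
  memLp : ∀ i, MemLp (fun ω => ε ω i) 2 P
  integral_eq_zero : ∀ i, ∫ ω, ε ω i ∂P = 0
  variance_eq : ∀ i, Var[fun ω => ε ω i; P] = v
  covariance_eq_zero : Pairwise fun i j => cov[fun ω => ε ω i, fun ω => ε ω j; P] = 0

theorem isWhiteNoise_of_hasLaw_gaussianReal {ε : Ω → ι → ℝ} {v : ℝ≥0}
    (hlaw : ∀ i, HasLaw (fun ω => ε ω i) (gaussianReal 0 v) P)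
    (hindep : Pairwise fun i j => (fun ω => ε ω i) ⟂ᵢ[P] (fun ω => ε ω j)) :
    IsWhiteNoise ε P v := by
  have hmemLp : ∀ i, MemLp (fun ω => ε ω i) 2 P := fun i =>
    (memLp_map_measure_iff aestronglyMeasurable_id (hlaw i).aemeasurable).mp
      ((hlaw i).map_eq ▸ memLp_id_gaussianReal 2)
  exact ⟨hmemLp, fun i => by simp [(hlaw i).integral_eq, integral_id_gaussianReal],
    fun i => by rw [(hlaw i).variance_eq, variance_id_gaussianReal],
    fun i j hij => (hindep hij).covariance_eq_zero (hmemLp i) (hmemLp j)⟩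

namespace IsWhiteNoise

variable [Fintype ι] {ε : Ω → ι → ℝ} {v : ℝ} (hε : IsWhiteNoise ε P v)
include hε

theorem memLp_dotProduct (a : ι → ℝ) : MemLp (fun ω => a ⬝ᵥ ε ω) 2 P :=
  memLp_finsetSum _ fun i _ => (hε.memLp i).const_mul (a i)

variable [IsProbabilityMeasure P]

theorem integral_const_add_dotProduct (c : ℝ) (a : ι → ℝ) :
    ∫ ω, (c + a ⬝ᵥ ε ω) ∂P = c := by
  rw [integral_add (integrable_const c) ((hε.memLp_dotProduct a).integrable one_le_two)]
  simp only [dotProduct]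
  rw [integral_finsetSum _ fun i _ => ((hε.memLp i).integrable one_le_two).const_mul (a i)]
  simp [integral_const_mul, hε.integral_eq_zero]

theorem variance_dotProduct (a : ι → ℝ) :
    Var[fun ω => a ⬝ᵥ ε ω; P] = v * ∑ i, a i ^ 2 := by
  simp only [dotProduct]
  rw [variance_fun_sum fun i => (hε.memLp i).const_mul (a i), Finset.mul_sum]
  simp only [covariance_const_mul_left, covariance_const_mul_right]
  refine Finset.sum_congr rfl fun i _ => ?_
  rw [Finset.sum_eq_single i
      (fun j _ hji => by rw [hε.covariance_eq_zero hji.symm, mul_zero, mul_zero]) (by simp),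
    covariance_self (hε.memLp i).aemeasurable, hε.variance_eq]
  ring

theorem integral_sq_const_add_dotProduct (c : ℝ) (a : ι → ℝ) :
    ∫ ω, (c + a ⬝ᵥ ε ω) ^ 2 ∂P = c ^ 2 + v * ∑ i, a i ^ 2 := by
  have hL : MemLp (fun ω => c + a ⬝ᵥ ε ω) 2 P := (memLp_const c).add (hε.memLp_dotProduct a)
  have h := variance_eq_sub hL
  rw [variance_const_add (hε.memLp_dotProduct a).aestronglyMeasurable c, hε.variance_dotProduct,
    hε.integral_const_add_dotProduct] at h
  simp only [Pi.pow_apply] at h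
  linarith

theorem integrable_sum_sq_const_add (c : ι → ℝ) :
    Integrable (fun ω => ∑ i, (c + ε ω) i ^ 2) P :=
  integrable_finsetSum _ fun i _ => ((memLp_const (c i)).add (hε.memLp i)).integrable_sq

variable {m : Type*}

theorem memLp_add_mulVec (c : m → ℝ) (A : Matrix m ι ℝ) (j : m) :
    MemLp (fun ω => (c + A *ᵥ ε ω) j) 2 P :=
  (memLp_const (c j)).add (hε.memLp_dotProduct (A j))

theorem integral_add_mulVec (c : m → ℝ) (A : Matrix m ι ℝ) (j : m) :
    ∫ ω, (c + A *ᵥ ε ω) j ∂P = c j :=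
  hε.integral_const_add_dotProduct (c j) (A j)

theorem integral_sum_sq_add_mulVec [Fintype m] (c : m → ℝ) (A : Matrix m ι ℝ) :
    ∫ ω, ∑ j, (c + A *ᵥ ε ω) j ^ 2 ∂P = ∑ j, c j ^ 2 + v * (A * Aᵀ).trace := by
  have hcoord (j : m) : ∫ ω, (c + A *ᵥ ε ω) j ^ 2 ∂P = c j ^ 2 + v * ∑ i, A j i ^ 2 :=
    hε.integral_sq_const_add_dotProduct (c j) (A j)
  rw [integral_finsetSum _ fun j _ => (hε.memLp_add_mulVec c A j).integrable_sq,
    Finset.sum_congr rfl fun j _ => hcoord j, Finset.sum_add_distrib, ← Finset.mul_sum]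
  simp only [trace, diag, mul_apply, transpose_apply, sq]

variable [Fintype m] {f : (ι → ℝ) → m → ℝ} (hf : Measurable f) {K : ℝ}
  (hK : ∀ y, ∑ j, f y j ^ 2 ≤ (∑ i, y i ^ 2) / K) (c : ι → ℝ)
include hf hK

theorem memLp_comp_const_add (j : m) : MemLp (fun ω => f (c + ε ω) j) 2 P := by
  have hmeas : AEStronglyMeasurable (fun ω => f (c + ε ω) j) P :=
    ((measurable_pi_apply j).comp_aemeasurable (hf.comp_aemeasurable
      (aemeasurable_const.add (aemeasurable_pi_lambda _ fun i => (hε.memLp i).aemeasurable))))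
      |>.aestronglyMeasurable
  refine (memLp_two_iff_integrable_sq hmeas).mpr
    (((hε.integrable_sum_sq_const_add c).div_const K).mono' (hmeas.pow 2) (ae_of_all _ fun ω => ?_))
  rw [Real.norm_of_nonneg (sq_nonneg _)]
  exact (Finset.single_le_sum (fun j _ => sq_nonneg (f (c + ε ω) j)) (Finset.mem_univ j)).trans
    (hK _)

theorem integral_sum_sq_comp_const_add_le :
    ∫ ω, ∑ j, f (c + ε ω) j ^ 2 ∂P ≤ (∑ i, c i ^ 2 + v * Fintype.card ι) / K := by
  classical
  calc ∫ ω, ∑ j, f (c + ε ω) j ^ 2 ∂P ≤ ∫ ω, (∑ i, (c + ε ω) i ^ 2) / K ∂P :=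
        integral_mono
          (integrable_finsetSum _ fun j _ => (hε.memLp_comp_const_add hf hK c j).integrable_sq)
          ((hε.integrable_sum_sq_const_add c).div_const K) fun ω => hK _
    _ = _ := by
      rw [integral_div]
      simpa using congrArg (· / K) (hε.integral_sum_sq_add_mulVec c 1)

end IsWhiteNoise

end WhiteNoise

theorem eq_add_extendRowsByZero_mulVec {n p s : ℕ} (hsp : s ≤ p) {X : Matrix (Fin n) (Fin p) ℝ}
    {XS : Matrix (Fin n) (Fin s) ℝ} (hXS : ∀ i k, XS i k = X i (Fin.castLE hsp k))
    (hdet : IsUnit (XSᵀ * XS).det) {βstar : Fin p → ℝ}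
    (hsupp : ∀ j : Fin p, s ≤ (j : ℕ) → βstar j = 0) {β : Fin p → ℝ} (e : Fin n → ℝ)
    (hβS : ∀ k : Fin s,
      β (Fin.castLE hsp k) = ((XSᵀ * XS)⁻¹ *ᵥ (XSᵀ *ᵥ (X *ᵥ βstar + e))) k)
    (hβSc : ∀ j : Fin p, s ≤ (j : ℕ) → β j = 0) :
    β = βstar + extendRowsByZero ((XSᵀ * XS)⁻¹ * XSᵀ) *ᵥ e := by
  ext j
  by_cases hj : (j : ℕ) < s
  · obtain ⟨k, rfl⟩ : ∃ k, Fin.castLE hsp k = j := ⟨⟨j, hj⟩, rfl⟩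
    rw [hβS, mulVec_eq_mulVec_comp_castLE hsp hXS hsupp,
      inv_transpose_mul_self_mulVec_transpose_mulVec_add hdet]
    simp [mulVec]
  · have hj : s ≤ (j : ℕ) := not_lt.mp hj
    simp [hβSc j hj, hsupp j hj, mulVec, extendRowsByZero_of_le _ hj]

theorem selectMLS_bias_sq_le_general
    {Ω : Type*} [MeasurableSpace Ω] (P : Measure Ω) [IsProbabilityMeasure P]
    {n p s : ℕ} (hsn : s < n) (hsp : s ≤ p)
    -- design matrix and true coefficients, supported on the first `s` coordinates
    (X : Matrix (Fin n) (Fin p) ℝ) (βstar : Fin p → ℝ)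
    (hsupp : ∀ j : Fin p, s ≤ (j : ℕ) → βstar j = 0)
    -- the submatrix of the columns indexed by `S`, of full column rank
    (XS : Matrix (Fin n) (Fin s) ℝ) (hXS : ∀ i k, XS i k = X i (Fin.castLE hsp k))
    (hrank : (XSᵀ * XS).PosDef)
    -- i.i.d. `N(0,σ²)` errors
    (σ : ℝ) (ε : Ω → Fin n → ℝ)
    (hεmeas : ∀ i, Measurable fun ω => ε ω i)
    (hindep : iIndepFun (fun i ω => ε ω i) P)
    (hgauss : ∀ i, P.map (fun ω => ε ω i) = gaussianReal 0 ⟨σ ^ 2, sq_nonneg σ⟩)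
    -- response
    (Y : Ω → Fin n → ℝ) (hY : ∀ ω, Y ω = X *ᵥ βstar + ε ω)
    -- model-selection procedure
    (Shat : (Fin n → ℝ) → Set (Fin p))
    -- Select+mLS estimator with threshold `τ`
    (τ : ℝ)
    (βtilde : (Fin n → ℝ) → Fin p → ℝ) (hβmeas : Measurable βtilde)
    (hbound : ∀ y : Fin n → ℝ,
      ∑ j, (βtilde y j) ^ 2 ≤ (∑ i, (y i) ^ 2) / (n * τ ^ 2))
    (hmLS : ∀ y : Fin n → ℝ, Shat y = {j : Fin p | (j : ℕ) < s} →
      (∀ k : Fin s, βtilde y (Fin.castLE hsp k) = ((XSᵀ * XS)⁻¹ *ᵥ (XSᵀ *ᵥ y)) k) ∧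
      (∀ j : Fin p, s ≤ (j : ℕ) → βtilde y j = 0)) :
    ∑ j, ((∫ ω, βtilde (Y ω) j ∂P) - βstar j) ^ 2
      ≤ 2 * (P {ω | Shat (Y ω) ≠ {j : Fin p | (j : ℕ) < s}}).toReal *
        ((σ ^ 2 / n) * Matrix.trace (((1 / (n : ℝ)) • (XSᵀ * XS))⁻¹)
          + ∑ j, (βstar j) ^ 2
          + (1 / τ ^ 2) * ((1 / (n : ℝ)) * ∑ i, ((X *ᵥ βstar) i) ^ 2)
          + σ ^ 2 / τ ^ 2) := by
  obtain rfl : Y = fun ω => X *ᵥ βstar + ε ω := funext hY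
  have hn : (n : ℝ) ≠ 0 := by exact_mod_cast (Nat.zero_lt_of_lt hsn).ne'
  have hε : IsWhiteNoise ε P (σ ^ 2) := isWhiteNoise_of_hasLaw_gaussianReal
    (fun i => ⟨(hεmeas i).aemeasurable, hgauss i⟩) fun i j hij => hindep.indepFun hij
  have hdet : IsUnit (XSᵀ * XS).det := isUnit_iff_ne_zero.mpr hrank.det_pos.ne'
  set M : Matrix (Fin p) (Fin n) ℝ := extendRowsByZero ((XSᵀ * XS)⁻¹ * XSᵀ)
  have hagree : ∀ ω ∉ {ω | Shat (X *ᵥ βstar + ε ω) ≠ {j : Fin p | (j : ℕ) < s}},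
      βtilde (X *ᵥ βstar + ε ω) = βstar + M *ᵥ ε ω := fun ω hω =>
    let ⟨hS, hSc⟩ := hmLS _ (not_not.mp hω)
    eq_add_extendRowsByZero_mulVec hsp hXS hdet hsupp (ε ω) hS hSc
  have hbias := sum_sq_integral_sub_integral_le (hε.memLp_comp_const_add hβmeas hbound _)
    (hε.memLp_add_mulVec βstar M) hagree
  rw [hε.integral_sum_sq_add_mulVec, trace_extendRowsByZero_mul_transpose hsp,
    inv_transpose_mul_self_mul_transpose_mul_transpose hdet] at hbias
  simp only [hε.integral_add_mulVec] at hbias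
  rw [← measureReal_def, trace_inv_smul (one_div_ne_zero hn) hdet]
  calc _ ≤ _ := hbias
    _ ≤ 2 * P.real {ω | Shat (X *ᵥ βstar + ε ω) ≠ {j : Fin p | (j : ℕ) < s}}
          * ((∑ i, (X *ᵥ βstar) i ^ 2 + σ ^ 2 * n) / (n * τ ^ 2)
            + (∑ j, βstar j ^ 2 + σ ^ 2 * ((XSᵀ * XS)⁻¹).trace)) := by
        gcongr
        simpa using hε.integral_sum_sq_comp_const_add_le hβmeas hbound (X *ᵥ βstar)
    _ = _ := by field_simp; ring

/-- In the fixed-design Gaussian linear model `Y = Xβ* + ε` with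
`β*` supported on `S = {1,…,s}`, a model-selection procedure `Ŝ` and a Select+mLS
estimator `β̃` with threshold `τ > 0`, the squared bias satisfies
`‖E[β̃(Y)] − β*‖₂² ≤ 2·P(Ŝ ≠ S)·[(σ²/n)·tr(C₁₁⁻¹) + ‖β*‖₂² + (1/τ²)(1/n)‖Xβ*‖₂² + σ²/τ²]`. -/
theorem selectMLS_bias_sq_le
    {Ω : Type*} [MeasurableSpace Ω] (P : Measure Ω) [IsProbabilityMeasure P]
    {n p s : ℕ} (hs : 0 < s) (hsn : s < n) (hsp : s ≤ p)
    -- design matrix and true coefficients, supported on the first `s` coordinates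
    (X : Matrix (Fin n) (Fin p) ℝ) (βstar : Fin p → ℝ)
    (hsupp : ∀ j : Fin p, s ≤ (j : ℕ) → βstar j = 0)
    -- the submatrix of the columns indexed by `S`, of full column rank
    (XS : Matrix (Fin n) (Fin s) ℝ) (hXS : ∀ i k, XS i k = X i (Fin.castLE hsp k))
    (hrank : (XSᵀ * XS).PosDef)
    -- i.i.d. `N(0,σ²)` errors
    (σ : ℝ) (hσ : 0 < σ) (ε : Ω → Fin n → ℝ)
    (hεmeas : ∀ i, Measurable fun ω => ε ω i)
    (hindep : iIndepFun (fun i ω => ε ω i) P)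
    (hgauss : ∀ i, P.map (fun ω => ε ω i) = gaussianReal 0 ⟨σ ^ 2, sq_nonneg σ⟩)
    -- response
    (Y : Ω → Fin n → ℝ) (hY : ∀ ω, Y ω = X *ᵥ βstar + ε ω)
    -- model-selection procedure
    (Shat : (Fin n → ℝ) → Set (Fin p)) (hShat : Measurable Shat)
    -- Select+mLS estimator with threshold `τ`
    (τ : ℝ) (hτ : 0 < τ)
    (βtilde : (Fin n → ℝ) → Fin p → ℝ) (hβmeas : Measurable βtilde)
    (hbound : ∀ y : Fin n → ℝ,
      ∑ j, (βtilde y j) ^ 2 ≤ (∑ i, (y i) ^ 2) / (n * τ ^ 2))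
    (hmLS : ∀ y : Fin n → ℝ, Shat y = {j : Fin p | (j : ℕ) < s} →
      (∀ k : Fin s, βtilde y (Fin.castLE hsp k) = ((XSᵀ * XS)⁻¹ *ᵥ (XSᵀ *ᵥ y)) k) ∧
      (∀ j : Fin p, s ≤ (j : ℕ) → βtilde y j = 0)) :
    ∑ j, ((∫ ω, βtilde (Y ω) j ∂P) - βstar j) ^ 2
      ≤ 2 * (P {ω | Shat (Y ω) ≠ {j : Fin p | (j : ℕ) < s}}).toReal *
        ((σ ^ 2 / n) * Matrix.trace (((1 / (n : ℝ)) • (XSᵀ * XS))⁻¹)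
          + ∑ j, (βstar j) ^ 2
          + (1 / τ ^ 2) * ((1 / (n : ℝ)) * ∑ i, ((X *ᵥ βstar) i) ^ 2)
          + σ ^ 2 / τ ^ 2) :=
  selectMLS_bias_sq_le_general P hsn hsp X βstar hsupp XS hXS hrank σ ε hεmeas hindep hgauss Y hY
    Shat τ βtilde hβmeas hbound hmLS
end

section
/- Under the fixed-design Gaussian linear model with a model-selection procedure Ŝ, the Select+Ridge estimator β̃ with parameter μ > 0, and smallest eigenvalue of C₁₁ at least Λ_min > 0, the squared bias satisfies ‖E[β̃(Y)] − β*‖₂² ≤ (2μ²/(n²Λ_min²))·‖β*‖₂² + 2·P(Ŝ ≠ S)·(n/μ)·[ (1/n)‖Xβ*‖₂² + σ² ]. -/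
open Matrix MeasureTheory ProbabilityTheory
open scoped NNReal

/-!
Let `r(y)` be the ridge fit restricted to the true support `S`. It is linear in `y`, so
`E r(Y) = r(Xβ*)`, and on the event `Ŝ = S` the Select+Ridge estimate equals `r(Y)` because ridge
solutions are unique. Hence `E β̃ − β* = (r(Xβ*) − β*) + E[(β̃ − r)(Y); Ŝ ≠ S]`.

The first term is the ridge bias: `d = r(Xβ*) − β*` solves `(XᵀX + μ)d = −μβ*` on `S`, and the
eigenvalue bound gives `‖d‖ ≤ μ‖β*‖ / (nΛmin)`. For the second, testing the normal equations
against a solution gives `μ‖β‖² ≤ ‖y‖²/4` for every ridge solution, whatever its support, so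
`‖β̃ − r‖² ≤ ‖y‖²/μ`; Cauchy–Schwarz on the event bounds the second term by
`P(Ŝ ≠ S) E‖Y‖²/μ`, and `E‖Y‖² = ‖Xβ*‖² + nσ²`.
-/

section DotProduct

variable {ι : Type*} [Fintype ι]

lemma dotProduct_self_nonneg (v : ι → ℝ) : 0 ≤ v ⬝ᵥ v :=
  Finset.sum_nonneg fun i _ => mul_self_nonneg (v i)

lemma sq_apply_le_dotProduct_self (v : ι → ℝ) (i : ι) : v i ^ 2 ≤ v ⬝ᵥ v := by
  simpa only [dotProduct, sq] using
    Finset.single_le_sum (fun j _ => mul_self_nonneg (v j)) (Finset.mem_univ i)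

lemma dotProduct_self_add_le (a b : ι → ℝ) : (a + b) ⬝ᵥ (a + b) ≤ 2 * (a ⬝ᵥ a + b ⬝ᵥ b) := by
  simp only [dotProduct, Pi.add_apply, ← sq, Finset.mul_sum, ← Finset.sum_add_distrib]
  exact Finset.sum_le_sum fun i _ => add_sq_le

lemma dotProduct_eq_of_eqOn {β u w : ι → ℝ} {T : Set ι} (hβ : ∀ j ∉ T, β j = 0)
    (huw : ∀ j ∈ T, u j = w j) : β ⬝ᵥ u = β ⬝ᵥ w := by
  refine Finset.sum_congr rfl fun j _ => ?_
  by_cases hj : j ∈ T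
  · rw [huw j hj]
  · simp [hβ j hj]

end DotProduct

namespace Matrix

variable {m ι : Type*} [Fintype m] [Fintype ι]

def IsRidgeOn (X : Matrix m ι ℝ) (μ : ℝ) (T : Set ι) (y : m → ℝ) (β : ι → ℝ) : Prop :=
  (∀ j ∉ T, β j = 0) ∧ ∀ j ∈ T, (Xᵀ *ᵥ (X *ᵥ β)) j + μ * β j = (Xᵀ *ᵥ y) j

namespace IsRidgeOn

variable {X : Matrix m ι ℝ} {μ : ℝ} {T : Set ι} {y y' : m → ℝ} {β β' : ι → ℝ}

lemma sub (h : IsRidgeOn X μ T y β) (h' : IsRidgeOn X μ T y' β') :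
    IsRidgeOn X μ T (y - y') (β - β') := by
  refine ⟨fun j hj => by simp [h.1 j hj, h'.1 j hj], fun j hj => ?_⟩
  simp only [mulVec_sub, Pi.sub_apply, ← h.2 j hj, ← h'.2 j hj]
  ring

lemma mulVec_dotProduct_mulVec_add (h : IsRidgeOn X μ T y β) :
    (X *ᵥ β) ⬝ᵥ (X *ᵥ β) + μ * (β ⬝ᵥ β) = y ⬝ᵥ (X *ᵥ β) := by
  have key : β ⬝ᵥ (Xᵀ *ᵥ (X *ᵥ β) + μ • β) = β ⬝ᵥ (Xᵀ *ᵥ y) :=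
    dotProduct_eq_of_eqOn h.1 fun j hj => by simpa using h.2 j hj
  rwa [dotProduct_add, dotProduct_smul, smul_eq_mul, dotProduct_transpose_mulVec,
    dotProduct_transpose_mulVec] at key

lemma mul_dotProduct_self_le (h : IsRidgeOn X μ T y β) : μ * (β ⬝ᵥ β) ≤ (y ⬝ᵥ y) / 4 := by
  have hsq := dotProduct_self_nonneg (X *ᵥ β - (1 / 2 : ℝ) • y)
  simp only [dotProduct_sub, sub_dotProduct, dotProduct_smul, smul_dotProduct, smul_eq_mul] at hsq
  linarith [h.mulVec_dotProduct_mulVec_add, dotProduct_comm y (X *ᵥ β)]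

lemma sq_apply_le (hμ : 0 < μ) (h : IsRidgeOn X μ T y β) (j : ι) :
    β j ^ 2 ≤ (y ⬝ᵥ y) / (4 * μ) := by
  rw [le_div_iff₀ (by positivity)]
  nlinarith [h.mul_dotProduct_self_le, sq_apply_le_dotProduct_self β j]

lemma sub_dotProduct_sub_le_of_isRidgeOn (hμ : 0 < μ) {T' : Set ι} (h : IsRidgeOn X μ T y β)
    (h' : IsRidgeOn X μ T' y β') : (β - β') ⬝ᵥ (β - β') ≤ (y ⬝ᵥ y) / μ := by
  have hadd := dotProduct_self_add_le β (-β')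
  rw [← sub_eq_add_neg, neg_dotProduct_neg] at hadd
  rw [le_div_iff₀ hμ]
  nlinarith [h.mul_dotProduct_self_le, h'.mul_dotProduct_self_le]

lemma unique (hμ : 0 < μ) (h : IsRidgeOn X μ T y β) (h' : IsRidgeOn X μ T y β') : β = β' := by
  have hle := (h.sub h').mul_dotProduct_self_le
  rw [sub_self, dotProduct_zero, zero_div] at hle
  have hzero : (β - β') ⬝ᵥ (β - β') = 0 :=
    le_antisymm (nonpos_of_mul_nonpos_right hle hμ) (dotProduct_self_nonneg _)
  exact sub_eq_zero.mp (dotProduct_self_eq_zero.mp hzero)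

lemma sub_dotProduct_sub_le_of_mulVec (hμ : 0 ≤ μ) {c : ℝ} (hc : 0 < c)
    (heig : ∀ d : ι → ℝ, (∀ j ∉ T, d j = 0) → c * (d ⬝ᵥ d) ≤ (X *ᵥ d) ⬝ᵥ (X *ᵥ d))
    {b : ι → ℝ} (hb : ∀ j ∉ T, b j = 0) (h : IsRidgeOn X μ T (X *ᵥ b) β) :
    (β - b) ⬝ᵥ (β - b) ≤ μ ^ 2 / c ^ 2 * (b ⬝ᵥ b) := by
  set d := β - b
  have hd : ∀ j ∉ T, d j = 0 := fun j hj => by simp [d, h.1 j hj, hb j hj]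
  -- on `T`, `d` solves the ridge equations with `Xᵀy` replaced by `-μ b`
  have hnormal : d ⬝ᵥ (Xᵀ *ᵥ (X *ᵥ d) + μ • d) = d ⬝ᵥ (-μ • b) :=
    dotProduct_eq_of_eqOn hd fun j hj => by
      have := h.2 j hj
      simp only [d, mulVec_sub, Pi.add_apply, Pi.sub_apply, Pi.smul_apply, smul_eq_mul]
      linarith
  rw [dotProduct_add, dotProduct_smul, dotProduct_smul, dotProduct_transpose_mulVec,
    smul_eq_mul, smul_eq_mul] at hnormal
  have hcs : (d ⬝ᵥ b) ^ 2 ≤ (d ⬝ᵥ d) * (b ⬝ᵥ b) := by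
    simpa only [dotProduct, sq] using Finset.sum_mul_sq_le_sq_mul_sq Finset.univ d b
  have hlow := heig d hd
  have hD := dotProduct_self_nonneg d
  rw [div_mul_eq_mul_div, le_div_iff₀ (by positivity)]
  rcases hD.eq_or_lt with hD0 | hDpos
  · rw [← hD0, zero_mul]
    exact mul_nonneg (sq_nonneg μ) (dotProduct_self_nonneg b)
  · have hcD : c * (d ⬝ᵥ d) ≤ μ * -(d ⬝ᵥ b) := by nlinarith
    have hsq : (c * (d ⬝ᵥ d)) ^ 2 ≤ μ ^ 2 * ((d ⬝ᵥ d) * (b ⬝ᵥ b)) := by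
      nlinarith [pow_le_pow_left₀ (by positivity) hcD 2]
    nlinarith

end IsRidgeOn

lemma mul_dotProduct_self_le_of_submatrix {κ : Type*} [Fintype κ] (X : Matrix m ι ℝ)
    {e : κ → ι} (he : Function.Injective e) {c : ℝ}
    (hc : ∀ v : κ → ℝ, c * (v ⬝ᵥ v) ≤ (X.submatrix id e *ᵥ v) ⬝ᵥ (X.submatrix id e *ᵥ v))
    {d : ι → ℝ} (hd : ∀ j ∉ Set.range e, d j = 0) : c * (d ⬝ᵥ d) ≤ (X *ᵥ d) ⬝ᵥ (X *ᵥ d) := by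
  have hdd : (d ∘ e) ⬝ᵥ (d ∘ e) = d ⬝ᵥ d :=
    Fintype.sum_of_injective e he _ _ (fun j hj => by simp [hd j hj]) fun _ => rfl
  have hXd : X.submatrix id e *ᵥ (d ∘ e) = X *ᵥ d := funext fun i =>
    Fintype.sum_of_injective e he _ _ (fun j hj => by simp [hd j hj]) fun _ => rfl
  simpa only [hdd, hXd] using hc (d ∘ e)

variable [DecidableEq ι]

/-- Zeroing the columns of `X` outside `T` keeps `AᵀA + μ` invertible on all of `ι` and forces the
solution to vanish outside `T`. -/
noncomputable def ridgeMatrix (X : Matrix m ι ℝ) (μ : ℝ) (T : Set ι) : Matrix ι m ℝ :=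
  let A := X * diagonal (T.indicator 1)
  (Aᵀ * A + μ • 1)⁻¹ * Aᵀ

lemma isRidgeOn_ridgeMatrix_mulVec (X : Matrix m ι ℝ) {μ : ℝ} (hμ : 0 < μ) (T : Set ι)
    (y : m → ℝ) : IsRidgeOn X μ T y (ridgeMatrix X μ T *ᵥ y) := by
  set D : Matrix ι ι ℝ := diagonal (T.indicator 1)
  set A := X * D
  set M := Aᵀ * A + μ • 1
  set β := ridgeMatrix X μ T *ᵥ y
  have hMpos : M.PosDef := by
    simpa [M] using PosDef.posSemidef_add (posSemidef_conjTranspose_mul_self A) (PosDef.one.smul hμ)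
  have hM : M *ᵥ β = Aᵀ *ᵥ y := by
    rw [show β = M⁻¹ *ᵥ (Aᵀ *ᵥ y) from (mulVec_mulVec _ _ _).symm, mulVec_mulVec,
      mul_nonsing_inv _ ((isUnit_iff_isUnit_det M).mp hMpos.isUnit), one_mulVec]
  have hAt : ∀ z, Aᵀ *ᵥ z = D *ᵥ (Xᵀ *ᵥ z) := fun z => by
    simp [A, D, transpose_mul, mulVec_mulVec]
  have hnormal : ∀ j, T.indicator 1 j * (Xᵀ *ᵥ (X *ᵥ (D *ᵥ β))) j + μ * β j
      = T.indicator 1 j * (Xᵀ *ᵥ y) j := fun j => by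
    simpa [M, add_mulVec, smul_mulVec, ← mulVec_mulVec, hAt, A, D, mulVec_diagonal] using
      congrFun hM j
  have hsupp : ∀ j ∉ T, β j = 0 := fun j hj => by
    simpa [hj, hμ.ne'] using hnormal j
  have hDβ : D *ᵥ β = β := funext fun j => by
    by_cases hj : j ∈ T <;> simp [D, mulVec_diagonal, hj, hsupp]
  exact ⟨hsupp, fun j hj => by simpa [hDβ, hj] using hnormal j⟩

end Matrix

section Moments

variable {Ω : Type*} [MeasurableSpace Ω] {P : Measure Ω}

namespace ProbabilityTheory.HasLaw

variable {X : Ω → ℝ} {a : ℝ} {v : ℝ≥0}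

lemma memLp_two_of_gaussianReal (hX : HasLaw X (gaussianReal a v) P) : MemLp X 2 P := by
  have h := memLp_id_gaussianReal' (μ := a) (v := v) 2 (by simp)
  rw [← hX.map_eq] at h
  exact (memLp_map_measure_iff aestronglyMeasurable_id hX.aemeasurable).1 h

lemma integral_of_gaussianReal (hX : HasLaw X (gaussianReal a v) P) : ∫ ω, X ω ∂P = a :=
  hX.integral_eq.trans integral_id_gaussianReal

lemma integral_sq_of_gaussianReal (hX : HasLaw X (gaussianReal a v) P) :
    ∫ ω, X ω ^ 2 ∂P = a ^ 2 + v := by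
  have := hX.isProbabilityMeasure
  have h := variance_eq_sub hX.memLp_two_of_gaussianReal
  rw [hX.variance_eq, variance_id_gaussianReal, hX.integral_of_gaussianReal] at h
  simp only [Pi.pow_apply] at h
  linarith

end ProbabilityTheory.HasLaw

lemma integral_mulVec_apply {κ m : Type*} [Fintype m] (R : Matrix κ m ℝ) {Z : Ω → m → ℝ}
    (hZ : ∀ i, Integrable (fun ω => Z ω i) P) (j : κ) :
    ∫ ω, (R *ᵥ Z ω) j ∂P = (R *ᵥ fun i => ∫ ω, Z ω i ∂P) j := by
  simp only [mulVec, dotProduct]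
  rw [integral_finsetSum _ fun i _ => (hZ i).const_mul _]
  simp only [integral_const_mul]

variable {ι : Type*} [Fintype ι]

lemma integrable_dotProduct_self_of_hasLaw_gaussianReal {Y : Ω → ι → ℝ} {a : ι → ℝ} {v : ℝ≥0}
    (hY : ∀ i, HasLaw (fun ω => Y ω i) (gaussianReal (a i) v) P) :
    Integrable (fun ω => Y ω ⬝ᵥ Y ω) P := by
  simpa only [dotProduct, ← sq] using
    integrable_finsetSum Finset.univ fun i _ => (hY i).memLp_two_of_gaussianReal.integrable_sq

lemma integral_dotProduct_self_of_hasLaw_gaussianReal {Y : Ω → ι → ℝ} {a : ι → ℝ} {v : ℝ≥0}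
    (hY : ∀ i, HasLaw (fun ω => Y ω i) (gaussianReal (a i) v) P) :
    ∫ ω, Y ω ⬝ᵥ Y ω ∂P = a ⬝ᵥ a + Fintype.card ι * v := by
  simp only [dotProduct, ← sq]
  rw [integral_finsetSum _ fun i _ => (hY i).memLp_two_of_gaussianReal.integrable_sq]
  simp only [(hY _).integral_sq_of_gaussianReal, Finset.sum_add_distrib, Finset.sum_const,
    Finset.card_univ, nsmul_eq_mul]

lemma memLp_two_of_sq_le {f g : Ω → ℝ} (hf : AEStronglyMeasurable f P) (hg : Integrable g P)
    (hfg : ∀ ω, f ω ^ 2 ≤ g ω) : MemLp f 2 P :=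
  (memLp_two_iff_integrable_sq hf).2 <| hg.mono' (hf.pow 2) <| ae_of_all _ fun ω => by
    simpa only [Real.norm_eq_abs, abs_of_nonneg (sq_nonneg (f ω))] using hfg ω

lemma sq_integral_le_measureReal_univ_mul [IsFiniteMeasure P] {f : Ω → ℝ} (hf : MemLp f 2 P) :
    (∫ ω, f ω ∂P) ^ 2 ≤ P.real Set.univ * ∫ ω, f ω ^ 2 ∂P := by
  rcases eq_zero_or_neZero P with rfl | _
  · simp
  have hjensen := (even_two.convexOn_pow (𝕜 := ℝ)).map_average_le (continuous_pow 2).continuousOn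
    isClosed_univ (ae_of_all _ fun _ => Set.mem_univ _) (hf.integrable one_le_two)
    hf.integrable_sq
  have hpos : 0 < P.real Set.univ := measureReal_univ_pos
  simp only [average_eq, smul_eq_mul, mul_pow] at hjensen
  field_simp at hjensen
  nlinarith

lemma sum_sq_setIntegral_le [IsFiniteMeasure P] {F : Ω → ι → ℝ} {g : Ω → ℝ}
    (hF : ∀ j, MemLp (fun ω => F ω j) 2 P) (hg : Integrable g P)
    (hFg : ∀ ω, F ω ⬝ᵥ F ω ≤ g ω) (B : Set Ω) :
    ∑ j, (∫ ω in B, F ω j ∂P) ^ 2 ≤ P.real B * ∫ ω, g ω ∂P := by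
  have hFF : Integrable (fun ω => F ω ⬝ᵥ F ω) P := by
    simpa only [dotProduct, ← sq] using
      integrable_finsetSum Finset.univ fun j _ => (hF j).integrable_sq
  calc ∑ j, (∫ ω in B, F ω j ∂P) ^ 2
      ≤ ∑ j, P.real B * ∫ ω in B, F ω j ^ 2 ∂P := Finset.sum_le_sum fun j _ => by
        simpa using sq_integral_le_measureReal_univ_mul ((hF j).restrict B)
    _ = P.real B * ∫ ω in B, F ω ⬝ᵥ F ω ∂P := by
        simp only [dotProduct, ← sq]
        rw [integral_finsetSum _ fun j _ => (hF j).integrable_sq.integrableOn, Finset.mul_sum]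
    _ ≤ P.real B * ∫ ω in B, g ω ∂P :=
        mul_le_mul_of_nonneg_left (integral_mono hFF.integrableOn hg.integrableOn hFg)
          measureReal_nonneg
    _ ≤ P.real B * ∫ ω, g ω ∂P :=
        mul_le_mul_of_nonneg_left (setIntegral_le_integral hg <| ae_of_all _ fun ω =>
          (dotProduct_self_nonneg (F ω)).trans (hFg ω)) measureReal_nonneg

end Moments

section SelectRidge

variable {Ω : Type*} [MeasurableSpace Ω] {P : Measure Ω}
  {m ι : Type*} [Fintype m] [Fintype ι] {X : Matrix m ι ℝ} {μ : ℝ}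

lemma memLp_two_apply_of_isRidgeOn (hμ : 0 < μ) {T : (m → ℝ) → Set ι} {b : (m → ℝ) → ι → ℝ}
    (hb : Measurable b) (hridge : ∀ y, IsRidgeOn X μ (T y) y (b y)) {Y : Ω → m → ℝ}
    (hY : Measurable Y) (hYY : Integrable (fun ω => Y ω ⬝ᵥ Y ω) P) (j : ι) :
    MemLp (fun ω => b (Y ω) j) 2 P :=
  memLp_two_of_sq_le ((measurable_pi_apply j).comp (hb.comp hY)).aestronglyMeasurable
    (hYY.div_const (4 * μ)) fun ω => (hridge (Y ω)).sq_apply_le hμ j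

lemma sum_sq_integral_sub_le_of_isRidgeOn [IsFiniteMeasure P] [DecidableEq ι] (hμ : 0 < μ)
    {Shat : (m → ℝ) → Set ι} {b : (m → ℝ) → ι → ℝ} (hb : Measurable b)
    (hridge : ∀ y, IsRidgeOn X μ (Shat y) y (b y)) (T : Set ι) {Y : Ω → m → ℝ}
    (hY : Measurable Y) (hYY : Integrable (fun ω => Y ω ⬝ᵥ Y ω) P) (β : ι → ℝ) :
    ∑ j, (∫ ω, b (Y ω) j ∂P - β j) ^ 2
      ≤ 2 * (((ridgeMatrix X μ T *ᵥ fun i => ∫ ω, Y ω i ∂P) - β)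
              ⬝ᵥ ((ridgeMatrix X μ T *ᵥ fun i => ∫ ω, Y ω i ∂P) - β)
            + P.real {ω | Shat (Y ω) ≠ T} * ((∫ ω, Y ω ⬝ᵥ Y ω ∂P) / μ)) := by
  set R := ridgeMatrix X μ T
  set B := {ω | Shat (Y ω) ≠ T}
  have hR : ∀ y, IsRidgeOn X μ T y (R *ᵥ y) := isRidgeOn_ridgeMatrix_mulVec X hμ T
  have hbL2 := memLp_two_apply_of_isRidgeOn hμ hb hridge hY hYY
  have hRL2 := memLp_two_apply_of_isRidgeOn hμ
    (continuous_const.matrix_mulVec continuous_id : Continuous fun y => R *ᵥ y).measurable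
    hR hY hYY
  have hYint : ∀ i, Integrable (fun ω => Y ω i) P := fun i =>
    (memLp_two_of_sq_le ((measurable_pi_apply i).comp hY).aestronglyMeasurable hYY
      fun ω => sq_apply_le_dotProduct_self (Y ω) i).integrable one_le_two
  set I : ι → ℝ := fun j => ∫ ω in B, (b (Y ω) - R *ᵥ Y ω) j ∂P
  have hsplit : ∀ j, ∫ ω, b (Y ω) j ∂P - β j
      = ((R *ᵥ fun i => ∫ ω, Y ω i ∂P) - β) j + I j := fun j => by
    have hgood : ∀ ω ∉ B, (b (Y ω) - R *ᵥ Y ω) j = 0 := fun ω hω => by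
      rw [(hridge (Y ω)).unique hμ (not_not.mp hω ▸ hR (Y ω)), sub_self, Pi.zero_apply]
    rw [show I j = ∫ ω, (b (Y ω) - R *ᵥ Y ω) j ∂P from
      setIntegral_eq_integral_of_forall_compl_eq_zero hgood]
    simp only [Pi.sub_apply]
    rw [integral_sub ((hbL2 j).integrable one_le_two) ((hRL2 j).integrable one_le_two),
      integral_mulVec_apply R hYint]
    ring
  have herr : ∑ j, I j ^ 2 ≤ P.real B * ((∫ ω, Y ω ⬝ᵥ Y ω ∂P) / μ) := by
    rw [← integral_div]
    exact sum_sq_setIntegral_le (fun j => (hbL2 j).sub (hRL2 j)) (hYY.div_const μ)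
      (fun ω => (hridge (Y ω)).sub_dotProduct_sub_le_of_isRidgeOn hμ (hR (Y ω))) B
  calc ∑ j, (∫ ω, b (Y ω) j ∂P - β j) ^ 2
      = ∑ j, (((R *ᵥ fun i => ∫ ω, Y ω i ∂P) - β) j + I j) ^ 2 := by simp only [hsplit]
    _ ≤ 2 * (((R *ᵥ fun i => ∫ ω, Y ω i ∂P) - β) ⬝ᵥ ((R *ᵥ fun i => ∫ ω, Y ω i ∂P) - β)
          + ∑ j, I j ^ 2) := by
        simpa only [dotProduct, ← sq, Pi.add_apply] using dotProduct_self_add_le _ I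
    _ ≤ _ := by gcongr

end SelectRidge

theorem selectRidge_bias_sq_le_general
    {Ω : Type*} [MeasurableSpace Ω] (P : Measure Ω) [IsProbabilityMeasure P]
    {n p s : ℕ} (hs : 0 < s) (hsn : s < n) (hsp : s ≤ p)
    (X : Matrix (Fin n) (Fin p) ℝ) (βstar : Fin p → ℝ)
    (hsupp : ∀ j : Fin p, s ≤ (j : ℕ) → βstar j = 0)
    (XS : Matrix (Fin n) (Fin s) ℝ) (hXS : ∀ i k, XS i k = X i (Fin.castLE hsp k))
    -- smallest eigenvalue of `C₁₁ = (1/n)X_SᵀX_S` is at least `Λmin > 0`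
    (Λmin : ℝ) (hΛ : 0 < Λmin)
    (heig : ∀ v : Fin s → ℝ,
      Λmin * ∑ k, (v k) ^ 2 ≤ v ⬝ᵥ (((1 / (n : ℝ)) • (XSᵀ * XS)) *ᵥ v))
    (σ : ℝ) (ε : Ω → Fin n → ℝ)
    (hεmeas : ∀ i, Measurable fun ω => ε ω i)
    (hgauss : ∀ i, P.map (fun ω => ε ω i) = gaussianReal 0 ⟨σ ^ 2, sq_nonneg σ⟩)
    (Y : Ω → Fin n → ℝ) (hY : ∀ ω, Y ω = X *ᵥ βstar + ε ω)
    (Shat : (Fin n → ℝ) → Set (Fin p))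
    -- Select+Ridge estimator with parameter `μ`: supported on `Ŝ(y)` and satisfying
    -- the ridge normal equations on the selected coordinates
    (μ : ℝ) (hμ : 0 < μ)
    (βtilde : (Fin n → ℝ) → Fin p → ℝ) (hβmeas : Measurable βtilde)
    (hRidge : ∀ y : Fin n → ℝ,
      (∀ j ∉ Shat y, βtilde y j = 0) ∧
      (∀ j ∈ Shat y, (Xᵀ *ᵥ (X *ᵥ βtilde y)) j + μ * βtilde y j = (Xᵀ *ᵥ y) j)) :
    ∑ j, ((∫ ω, βtilde (Y ω) j ∂P) - βstar j) ^ 2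
      ≤ (2 * μ ^ 2 / ((n : ℝ) ^ 2 * Λmin ^ 2)) * ∑ j, (βstar j) ^ 2
        + 2 * (P {ω | Shat (Y ω) ≠ {j : Fin p | (j : ℕ) < s}}).toReal * ((n : ℝ) / μ) *
          ((1 / (n : ℝ)) * ∑ i, ((X *ᵥ βstar) i) ^ 2 + σ ^ 2) := by
  set m := X *ᵥ βstar
  have hn : (0 : ℝ) < n := by exact_mod_cast hs.trans hsn
  have hlaw : ∀ i, HasLaw (fun ω => Y ω i) (gaussianReal (m i) ⟨σ ^ 2, sq_nonneg σ⟩) P :=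
    fun i => by simpa [hY] using gaussianReal_const_add ⟨(hεmeas i).aemeasurable, hgauss i⟩ (m i)
  have hYmeas : Measurable Y := by
    rw [funext hY]
    exact measurable_const.add (measurable_pi_lambda _ hεmeas)
  have hEY : (fun i => ∫ ω, Y ω i ∂P) = m := funext fun i => (hlaw i).integral_of_gaussianReal
  have heig' : ∀ v, n * Λmin * (v ⬝ᵥ v)
      ≤ (X.submatrix id (Fin.castLE hsp) *ᵥ v) ⬝ᵥ (X.submatrix id (Fin.castLE hsp) *ᵥ v) := by
    intro v
    have h := heig v
    rw [show XS = X.submatrix id (Fin.castLE hsp) from Matrix.ext hXS, smul_mulVec,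
      dotProduct_smul, ← mulVec_mulVec, dotProduct_transpose_mulVec, smul_eq_mul,
      one_div_mul_eq_div, le_div_iff₀' hn] at h
    simpa only [dotProduct, sq, mul_assoc] using h
  have hbias := (isRidgeOn_ridgeMatrix_mulVec X hμ {j : Fin p | (j : ℕ) < s} m)
    |>.sub_dotProduct_sub_le_of_mulVec hμ.le (by positivity)
      (fun d hd => mul_dotProduct_self_le_of_submatrix X (Fin.castLE_injective hsp) heig'
        (Fin.range_castLE hsp ▸ hd))
      fun j hj => hsupp j (not_lt.mp hj)
  calc _ ≤ _ := sum_sq_integral_sub_le_of_isRidgeOn hμ hβmeas hRidge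
        {j : Fin p | (j : ℕ) < s} hYmeas
        (integrable_dotProduct_self_of_hasLaw_gaussianReal hlaw) βstar
    _ ≤ 2 * (μ ^ 2 / (n * Λmin) ^ 2 * (βstar ⬝ᵥ βstar)
          + P.real {ω | Shat (Y ω) ≠ {j : Fin p | (j : ℕ) < s}} * ((m ⬝ᵥ m + n * σ ^ 2) / μ)) := by
        rw [hEY, integral_dotProduct_self_of_hasLaw_gaussianReal hlaw, Fintype.card_fin]
        gcongr
        exact le_of_eq rfl
    _ = _ := by
        simp only [dotProduct, ← sq, measureReal_def]
        field_simp

/-- In the fixed-design Gaussian linear model `Y = Xβ* + ε` with `β*`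
supported on `S = {1,…,s}`, a model-selection procedure `Ŝ` and the Select+Ridge
estimator `β̃` with parameter `μ > 0`, if the smallest eigenvalue of `C₁₁` is at least
`Λ_min > 0`, then the squared bias satisfies
`‖E[β̃(Y)] − β*‖₂² ≤ (2μ²/(n²Λ_min²))·‖β*‖₂² + 2·P(Ŝ ≠ S)·(n/μ)·[(1/n)‖Xβ*‖₂² + σ²]`. -/
theorem selectRidge_bias_sq_le
    {Ω : Type*} [MeasurableSpace Ω] (P : Measure Ω) [IsProbabilityMeasure P]
    {n p s : ℕ} (hs : 0 < s) (hsn : s < n) (hsp : s ≤ p)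
    (X : Matrix (Fin n) (Fin p) ℝ) (βstar : Fin p → ℝ)
    (hsupp : ∀ j : Fin p, s ≤ (j : ℕ) → βstar j = 0)
    (XS : Matrix (Fin n) (Fin s) ℝ) (hXS : ∀ i k, XS i k = X i (Fin.castLE hsp k))
    (hrank : (XSᵀ * XS).PosDef)
    -- smallest eigenvalue of `C₁₁ = (1/n)X_SᵀX_S` is at least `Λmin > 0`
    (Λmin : ℝ) (hΛ : 0 < Λmin)
    (heig : ∀ v : Fin s → ℝ,
      Λmin * ∑ k, (v k) ^ 2 ≤ v ⬝ᵥ (((1 / (n : ℝ)) • (XSᵀ * XS)) *ᵥ v))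
    (σ : ℝ) (hσ : 0 < σ) (ε : Ω → Fin n → ℝ)
    (hεmeas : ∀ i, Measurable fun ω => ε ω i)
    (hindep : iIndepFun (fun i ω => ε ω i) P)
    (hgauss : ∀ i, P.map (fun ω => ε ω i) = gaussianReal 0 ⟨σ ^ 2, sq_nonneg σ⟩)
    (Y : Ω → Fin n → ℝ) (hY : ∀ ω, Y ω = X *ᵥ βstar + ε ω)
    (Shat : (Fin n → ℝ) → Set (Fin p)) (hShat : Measurable Shat)
    -- Select+Ridge estimator with parameter `μ`: supported on `Ŝ(y)` and satisfying
    -- the ridge normal equations on the selected coordinates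
    (μ : ℝ) (hμ : 0 < μ)
    (βtilde : (Fin n → ℝ) → Fin p → ℝ) (hβmeas : Measurable βtilde)
    (hRidge : ∀ y : Fin n → ℝ,
      (∀ j ∉ Shat y, βtilde y j = 0) ∧
      (∀ j ∈ Shat y, (Xᵀ *ᵥ (X *ᵥ βtilde y)) j + μ * βtilde y j = (Xᵀ *ᵥ y) j)) :
    ∑ j, ((∫ ω, βtilde (Y ω) j ∂P) - βstar j) ^ 2
      ≤ (2 * μ ^ 2 / ((n : ℝ) ^ 2 * Λmin ^ 2)) * ∑ j, (βstar j) ^ 2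
        + 2 * (P {ω | Shat (Y ω) ≠ {j : Fin p | (j : ℕ) < s}}).toReal * ((n : ℝ) / μ) *
          ((1 / (n : ℝ)) * ∑ i, ((X *ᵥ βstar) i) ^ 2 + σ ^ 2) :=
  selectRidge_bias_sq_le_general P hs hsn hsp X βstar hsupp XS hXS Λmin hΛ heig σ ε hεmeas hgauss Y
    hY Shat μ hμ βtilde hβmeas hRidge
end

section
/- Under the fixed-design Gaussian linear model with a model-selection procedure Ŝ and the Select+mLS estimator β̃ with threshold τ > 0, for every t ∈ ℝ^s one has |P(√n·(β̃(Y)_S − β*_S) ≤ t) − P(√n·(X_SᵀX_S)⁻¹X_Sᵀε ≤ t)| ≤ 2·P(Ŝ ≠ S), where ≤ between vectors is componentwise. (The second probability is the distribution function of the N(0, σ²C₁₁⁻¹) law; this is the finite-sample inequality underlying the asymptotic normality of Select+mLS.) -/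
open Matrix MeasureTheory ProbabilityTheory

/-! On the event `Ŝ(Y) = S` the Select+mLS estimator is the least-squares fit on `S`, and since
`Y = X_S β*_S + ε` there, `β̃(Y)_S − β*_S = (X_SᵀX_S)⁻¹X_Sᵀε` exactly. So the two events in the
statement can only differ on `{Ŝ(Y) ≠ S}`, and the probabilities of two events that agree off a
set `N` differ by at most the probability of `N`. -/

noncomputable def leastSquares {m k R : Type*} [Fintype m] [Fintype k] [DecidableEq k]
    [CommRing R] (A : Matrix m k R) (y : m → R) : k → R :=
  (Aᵀ * A)⁻¹ *ᵥ (Aᵀ *ᵥ y)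

section LeastSquares

variable {m k R : Type*} [Fintype m] [Fintype k] [DecidableEq k] [CommRing R]

lemma leastSquares_add (A : Matrix m k R) (y z : m → R) :
    leastSquares A (y + z) = leastSquares A y + leastSquares A z := by
  simp only [leastSquares, mulVec_add]

lemma leastSquares_mulVec (A : Matrix m k R) (hA : IsUnit (Aᵀ * A).det) (b : k → R) :
    leastSquares A (A *ᵥ b) = b := by
  rw [leastSquares, mulVec_mulVec, mulVec_mulVec, Matrix.mul_assoc, nonsing_inv_mul _ hA,
    one_mulVec]

end LeastSquares

lemma mulVec_eq_submatrix_mulVec_comp {m ι κ R : Type*} [Fintype ι] [Fintype κ]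
    [NonUnitalNonAssocSemiring R] (X : Matrix m κ R) {e : ι → κ} (he : e.Injective)
    {β : κ → R} (hβ : ∀ j ∉ Set.range e, β j = 0) :
    X *ᵥ β = X.submatrix id e *ᵥ (β ∘ e) := by
  funext i
  exact (Fintype.sum_of_injective e he _ _ (fun j hj => by simp [hβ j hj]) fun _ => rfl).symm

lemma measureReal_le_add_of_mem_iff {Ω : Type*} [MeasurableSpace Ω] (μ : Measure Ω)
    [IsFiniteMeasure μ] {A B N : Set Ω} (h : ∀ ω ∉ N, ω ∈ A ↔ ω ∈ B) :
    μ.real A ≤ μ.real B + μ.real N :=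
  calc μ.real A ≤ μ.real (B ∪ N) :=
        measureReal_mono fun ω hω => or_iff_not_imp_right.mpr fun hN => (h ω hN).mp hω
    _ ≤ μ.real B + μ.real N := measureReal_union_le B N

lemma abs_measureReal_sub_le_of_mem_iff {Ω : Type*} [MeasurableSpace Ω] (μ : Measure Ω)
    [IsFiniteMeasure μ] {A B N : Set Ω} (h : ∀ ω ∉ N, ω ∈ A ↔ ω ∈ B) :
    |μ.real A - μ.real B| ≤ μ.real N := by
  have hAB := measureReal_le_add_of_mem_iff μ h
  have hBA := measureReal_le_add_of_mem_iff μ fun ω hω => (h ω hω).symm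
  rw [abs_sub_le_iff]
  constructor <;> linarith

theorem selectMLS_distribution_approx_general
    {Ω : Type*} [MeasurableSpace Ω] (P : Measure Ω) [IsProbabilityMeasure P]
    {n p s : ℕ} (hsp : s ≤ p)
    (X : Matrix (Fin n) (Fin p) ℝ) (βstar : Fin p → ℝ)
    (hsupp : ∀ j : Fin p, s ≤ (j : ℕ) → βstar j = 0)
    (XS : Matrix (Fin n) (Fin s) ℝ) (hXS : ∀ i k, XS i k = X i (Fin.castLE hsp k))
    (hrank : (XSᵀ * XS).PosDef)
    (ε : Ω → Fin n → ℝ)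
    (Y : Ω → Fin n → ℝ) (hY : ∀ ω, Y ω = X *ᵥ βstar + ε ω)
    (Shat : (Fin n → ℝ) → Set (Fin p))
    (βtilde : (Fin n → ℝ) → Fin p → ℝ)
    (hmLS : ∀ y : Fin n → ℝ, Shat y = {j : Fin p | (j : ℕ) < s} →
      (∀ k : Fin s, βtilde y (Fin.castLE hsp k) = ((XSᵀ * XS)⁻¹ *ᵥ (XSᵀ *ᵥ y)) k) ∧
      (∀ j : Fin p, s ≤ (j : ℕ) → βtilde y j = 0))
    (t : Fin s → ℝ) :
    |(P {ω | ∀ k : Fin s,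
          Real.sqrt n * (βtilde (Y ω) (Fin.castLE hsp k) - βstar (Fin.castLE hsp k)) ≤ t k}).toReal
      - (P {ω | ∀ k : Fin s,
          Real.sqrt n * (((XSᵀ * XS)⁻¹ *ᵥ (XSᵀ *ᵥ ε ω)) k) ≤ t k}).toReal|
      ≤ 2 * (P {ω | Shat (Y ω) ≠ {j : Fin p | (j : ℕ) < s}}).toReal := by
  have hXβ : X *ᵥ βstar = XS *ᵥ (βstar ∘ Fin.castLE hsp) := by
    rw [mulVec_eq_submatrix_mulVec_comp X (Fin.castLE_injective hsp)
      fun j hj => hsupp j (not_lt.mp fun hlt => hj ⟨⟨j, hlt⟩, rfl⟩)]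
    congr 1
    exact (Matrix.ext hXS).symm
  have hdet : IsUnit (XSᵀ * XS).det := (isUnit_iff_isUnit_det _).mp hrank.isUnit
  have hcoupling : ∀ ω, Shat (Y ω) = {j : Fin p | (j : ℕ) < s} → ∀ k : Fin s,
      βtilde (Y ω) (Fin.castLE hsp k) - βstar (Fin.castLE hsp k) = leastSquares XS (ε ω) k := by
    intro ω hω k
    rw [(hmLS _ hω).1 k, ← leastSquares, hY, hXβ, leastSquares_add,
      leastSquares_mulVec XS hdet, Pi.add_apply, Function.comp_apply, add_sub_cancel_left]
  refine (abs_measureReal_sub_le_of_mem_iff P fun ω hω => ?_).trans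
    (le_mul_of_one_le_left measureReal_nonneg one_le_two)
  simp only [Set.mem_ofPred_eq, not_not] at hω ⊢
  simp only [hcoupling ω hω, leastSquares]

/-- In the fixed-design Gaussian linear model with a model-selection
procedure `Ŝ` and a Select+mLS estimator `β̃` with threshold `τ > 0`, for every
`t ∈ ℝ^s`,
`|P(√n(β̃(Y)_S − β*_S) ≤ t) − P(√n(X_SᵀX_S)⁻¹X_Sᵀε ≤ t)| ≤ 2·P(Ŝ ≠ S)`,
where `≤` between vectors is componentwise. -/
theorem selectMLS_distribution_approx
    {Ω : Type*} [MeasurableSpace Ω] (P : Measure Ω) [IsProbabilityMeasure P]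
    {n p s : ℕ} (hs : 0 < s) (hsn : s < n) (hsp : s ≤ p)
    (X : Matrix (Fin n) (Fin p) ℝ) (βstar : Fin p → ℝ)
    (hsupp : ∀ j : Fin p, s ≤ (j : ℕ) → βstar j = 0)
    (XS : Matrix (Fin n) (Fin s) ℝ) (hXS : ∀ i k, XS i k = X i (Fin.castLE hsp k))
    (hrank : (XSᵀ * XS).PosDef)
    (σ : ℝ) (hσ : 0 < σ) (ε : Ω → Fin n → ℝ)
    (hεmeas : ∀ i, Measurable fun ω => ε ω i)
    (hindep : iIndepFun (fun i ω => ε ω i) P)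
    (hgauss : ∀ i, P.map (fun ω => ε ω i) = gaussianReal 0 ⟨σ ^ 2, sq_nonneg σ⟩)
    (Y : Ω → Fin n → ℝ) (hY : ∀ ω, Y ω = X *ᵥ βstar + ε ω)
    (Shat : (Fin n → ℝ) → Set (Fin p)) (hShat : Measurable Shat)
    (τ : ℝ) (hτ : 0 < τ)
    (βtilde : (Fin n → ℝ) → Fin p → ℝ) (hβmeas : Measurable βtilde)
    (hbound : ∀ y : Fin n → ℝ,
      ∑ j, (βtilde y j) ^ 2 ≤ (∑ i, (y i) ^ 2) / (n * τ ^ 2))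
    (hmLS : ∀ y : Fin n → ℝ, Shat y = {j : Fin p | (j : ℕ) < s} →
      (∀ k : Fin s, βtilde y (Fin.castLE hsp k) = ((XSᵀ * XS)⁻¹ *ᵥ (XSᵀ *ᵥ y)) k) ∧
      (∀ j : Fin p, s ≤ (j : ℕ) → βtilde y j = 0))
    (t : Fin s → ℝ) :
    |(P {ω | ∀ k : Fin s,
          Real.sqrt n * (βtilde (Y ω) (Fin.castLE hsp k) - βstar (Fin.castLE hsp k)) ≤ t k}).toReal
      - (P {ω | ∀ k : Fin s,
          Real.sqrt n * (((XSᵀ * XS)⁻¹ *ᵥ (XSᵀ *ᵥ ε ω)) k) ≤ t k}).toReal|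
      ≤ 2 * (P {ω | Shat (Y ω) ≠ {j : Fin p | (j : ℕ) < s}}).toReal :=
  selectMLS_distribution_approx_general P hsp X βstar hsupp XS hXS hrank ε Y hY Shat βtilde hmLS t
end

section
/- Let X_S be a real n×s matrix of full column rank whose i-th row is x_{i,S} ∈ ℝ^s, suppose the smallest eigenvalue of C₁₁ = (1/n)X_SᵀX_S is at least Λ_min > 0, and let ε ∈ ℝⁿ have i.i.d. N(0,σ²) entries. Then P( max_{1≤i≤n} |x_{i,S}ᵀ(X_SᵀX_S)⁻¹X_Sᵀε| ≥ 1/3 ) ≤ 9·(σ²/Λ_min)·(s/n)·max_{1≤i≤n}‖x_{i,S}‖₂². -/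
/-!
Cauchy–Schwarz bounds every fitted noise entry by `‖x_{i,S}‖₂ ‖(X_SᵀX_S)⁻¹X_Sᵀε‖₂`, so one Markov
inequality for the squared norm of `(X_SᵀX_S)⁻¹X_Sᵀε` controls all `n` entries at once. For
independent centred noise this squared norm has mean `σ² tr (X_SᵀX_S)⁻¹`, and the eigenvalue bound
makes every diagonal entry of `(X_SᵀX_S)⁻¹` at most `1 / (n Λ_min)`.
-/

open Matrix MeasureTheory ProbabilityTheory

namespace Matrix

variable {m n : Type*} [Fintype m] [Fintype n] [DecidableEq n]

theorem isUnit_det_of_coercive {B : Matrix n n ℝ} {c : ℝ} (hc : 0 < c)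
    (hB : ∀ v : n → ℝ, c * ∑ k, v k ^ 2 ≤ v ⬝ᵥ (B *ᵥ v)) : IsUnit B.det := by
  refine isUnit_iff_ne_zero.mpr fun hdet => ?_
  obtain ⟨v, hv, hBv⟩ := exists_mulVec_eq_zero_iff.mpr hdet
  have hsum : ∑ k, v k ^ 2 ≤ 0 := by
    have := hB v
    rw [hBv, dotProduct_zero] at this
    exact nonpos_of_mul_nonpos_right this hc
  refine hv (funext fun k => (pow_eq_zero_iff two_ne_zero).mp (le_antisymm ?_ (sq_nonneg _)))
  exact (Finset.single_le_sum (fun l _ => sq_nonneg (v l)) (Finset.mem_univ k)).trans hsum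

theorem inv_apply_self_le_of_coercive {B : Matrix n n ℝ} {c : ℝ} (hc : 0 < c)
    (hB : ∀ v : n → ℝ, c * ∑ k, v k ^ 2 ≤ v ⬝ᵥ (B *ᵥ v)) (k : n) : B⁻¹ k k ≤ c⁻¹ := by
  set u := B⁻¹ *ᵥ Pi.single k 1
  have hBu : B *ᵥ u = Pi.single k 1 := by
    rw [mulVec_mulVec, mul_nonsing_inv B (isUnit_det_of_coercive hc hB), one_mulVec]
  have huk : u k = B⁻¹ k k := by simp [u]
  have hcoer : c * u k ^ 2 ≤ u k := calc
    c * u k ^ 2 ≤ c * ∑ l, u l ^ 2 := by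
      gcongr; exact Finset.single_le_sum (fun l _ => sq_nonneg (u l)) (Finset.mem_univ k)
    _ ≤ u k := by simpa [hBu, dotProduct_single] using hB u
  rw [← huk]
  rcases le_or_gt (u k) 0 with hnonpos | hpos
  · exact hnonpos.trans (inv_nonneg.mpr hc.le)
  · rw [← one_div, le_div_iff₀' hc]
    exact le_of_mul_le_mul_right (by linarith [hcoer]) hpos

theorem trace_inv_le_of_coercive {B : Matrix n n ℝ} {c : ℝ} (hc : 0 < c)
    (hB : ∀ v : n → ℝ, c * ∑ k, v k ^ 2 ≤ v ⬝ᵥ (B *ᵥ v)) :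
    B⁻¹.trace ≤ Fintype.card n / c :=
  calc B⁻¹.trace ≤ ∑ _k : n, c⁻¹ :=
        Finset.sum_le_sum fun k _ => inv_apply_self_le_of_coercive hc hB k
    _ = Fintype.card n / c := by simp [div_eq_mul_inv]

theorem sum_sq_gram_inv_mul_transpose (X : Matrix m n ℝ) (hX : IsUnit (Xᵀ * X).det) :
    ∑ k, ∑ j, ((Xᵀ * X)⁻¹ * Xᵀ) k j ^ 2 = ((Xᵀ * X)⁻¹).trace := by
  set A := (Xᵀ * X)⁻¹ * Xᵀ
  have hAAt : A * Aᵀ = (Xᵀ * X)⁻¹ := by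
    rw [transpose_mul, transpose_nonsing_inv, transpose_mul, transpose_transpose, Matrix.mul_assoc,
      ← Matrix.mul_assoc Xᵀ, mul_nonsing_inv _ hX, Matrix.mul_one]
  simp only [← hAAt, trace, diag_apply, mul_apply, transpose_apply, sq]

end Matrix

namespace ProbabilityTheory

variable {Ω : Type*} [MeasurableSpace Ω] {P : Measure Ω}

theorem HasLaw.memLp {E : Type*} [NormedAddCommGroup E] [MeasurableSpace E] {μ : Measure E}
    {X : Ω → E} (hX : HasLaw X μ P) {p : ENNReal} (h : MemLp id p μ) : MemLp X p P := by
  rw [← hX.map_eq] at h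
  exact (memLp_map_measure_iff h.aestronglyMeasurable hX.aemeasurable).mp h

section RandomVector

variable {ι : Type*} [Fintype ι] {X : Ω → ι → ℝ}

theorem memLp_dotProduct {p : ENNReal} (hX : ∀ i, MemLp (fun ω => X ω i) p P) (a : ι → ℝ) :
    MemLp (fun ω => a ⬝ᵥ X ω) p P :=
  memLp_finsetSum _ fun i _ => (hX i).const_mul (a i)

theorem integrable_sum_mulVec_sq {κ : Type*} [Fintype κ] (hX : ∀ i, MemLp (fun ω => X ω i) 2 P)
    (A : Matrix κ ι ℝ) : Integrable (fun ω => ∑ k, (A *ᵥ X ω) k ^ 2) P :=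
  integrable_finsetSum _ fun k _ => (memLp_dotProduct hX (A k)).integrable_sq

variable [IsProbabilityMeasure P] {v : ℝ} (hX : ∀ i, MemLp (fun ω => X ω i) 2 P)
  (hindep : Pairwise fun i j => (fun ω => X ω i) ⟂ᵢ[P] fun ω => X ω j)
  (hmean : ∀ i, ∫ ω, X ω i ∂P = 0) (hvar : ∀ i, Var[fun ω => X ω i; P] = v)
include hX hindep hmean hvar

theorem integral_dotProduct_sq (a : ι → ℝ) :
    ∫ ω, (a ⬝ᵥ X ω) ^ 2 ∂P = v * ∑ i, a i ^ 2 := by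
  set Y : ι → Ω → ℝ := fun i ω => a i * X ω i
  have hY : ∀ i, MemLp (Y i) 2 P := fun i => (hX i).const_mul (a i)
  have hcentred : P[∑ i, Y i] = 0 := by
    simp [Y, integral_finsetSum _ fun i _ => (hY i).integrable one_le_two, integral_const_mul,
      hmean]
  have hvar_sum : Var[∑ i, Y i; P] = ∑ i, Var[Y i; P] := IndepFun.variance_sum (fun i _ => hY i)
    fun i _ j _ hij => (hindep hij).comp (measurable_const_mul (a i)) (measurable_const_mul (a j))
  rw [variance_of_integral_eq_zero (memLp_finsetSum' _ fun i _ => hY i).aemeasurable hcentred]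
    at hvar_sum
  have hvarY : ∀ i, Var[Y i; P] = v * a i ^ 2 := fun i => by
    rw [variance_const_mul, hvar, mul_comm]
  rw [Finset.mul_sum, ← Finset.sum_congr rfl fun i _ => hvarY i, ← hvar_sum]
  simp [Y, dotProduct]

theorem integral_sum_mulVec_sq {κ : Type*} [Fintype κ] (A : Matrix κ ι ℝ) :
    ∫ ω, ∑ k, (A *ᵥ X ω) k ^ 2 ∂P = v * ∑ k, ∑ i, A k i ^ 2 := by
  simp only [mulVec]
  rw [integral_finsetSum _ fun k _ => (memLp_dotProduct hX (A k)).integrable_sq, Finset.mul_sum]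
  exact Finset.sum_congr rfl fun k _ => integral_dotProduct_sq hX hindep hmean hvar (A k)

end RandomVector

theorem measureReal_exists_le_abs_dotProduct_le [IsFiniteMeasure P] {m κ : Type*} [Fintype m]
    [Fintype κ] (R : Matrix m κ ℝ) {Y : Ω → κ → ℝ} (hY : Integrable (fun ω => ∑ k, Y ω k ^ 2) P)
    {t : ℝ} (ht : 0 < t) :
    P.real {ω | ∃ i, t ≤ |R i ⬝ᵥ Y ω|}
      ≤ (⨆ i, ∑ k, R i k ^ 2) * (∫ ω, ∑ k, Y ω k ^ 2 ∂P) / t ^ 2 := by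
  set M := ⨆ i, ∑ k, R i k ^ 2
  have hM : 0 ≤ M := Real.iSup_nonneg fun i => Finset.sum_nonneg fun k _ => sq_nonneg _
  have hsub : {ω | ∃ i, t ≤ |R i ⬝ᵥ Y ω|} ⊆ {ω | t ^ 2 ≤ M * ∑ k, Y ω k ^ 2} := by
    rintro ω ⟨i, hi⟩
    calc t ^ 2 ≤ |R i ⬝ᵥ Y ω| ^ 2 := by gcongr
      _ = (R i ⬝ᵥ Y ω) ^ 2 := sq_abs _
      _ ≤ (∑ k, R i k ^ 2) * ∑ k, Y ω k ^ 2 := Finset.sum_mul_sq_le_sq_mul_sq _ _ _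
      _ ≤ M * ∑ k, Y ω k ^ 2 := by
        gcongr
        exact le_ciSup (f := fun i => ∑ k, R i k ^ 2) (Set.finite_range _).bddAbove i
  have hmarkov := mul_meas_ge_le_integral_of_nonneg
    (ae_of_all _ fun ω => mul_nonneg hM (Finset.sum_nonneg fun k _ => sq_nonneg (Y ω k)))
    (hY.const_mul M) (t ^ 2)
  rw [integral_const_mul] at hmarkov
  rw [le_div_iff₀ (by positivity), mul_comm]
  exact (mul_le_mul_of_nonneg_left (measureReal_mono hsub) (by positivity)).trans hmarkov

end ProbabilityTheory

theorem max_fitted_noise_prob_le_general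
    {Ω : Type*} [MeasurableSpace Ω] (P : Measure Ω) [IsProbabilityMeasure P]
    {n s : ℕ} (hn : 0 < n)
    (XS : Matrix (Fin n) (Fin s) ℝ)
    (Λmin : ℝ) (hΛ : 0 < Λmin)
    (heig : ∀ v : Fin s → ℝ,
      Λmin * ∑ k, (v k) ^ 2 ≤ v ⬝ᵥ (((1 / (n : ℝ)) • (XSᵀ * XS)) *ᵥ v))
    (σ : ℝ) (ε : Ω → Fin n → ℝ)
    (hεmeas : ∀ i, Measurable fun ω => ε ω i)
    (hindep : iIndepFun (fun i ω => ε ω i) P)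
    (hgauss : ∀ i, P.map (fun ω => ε ω i) = gaussianReal 0 ⟨σ ^ 2, sq_nonneg σ⟩) :
    (P {ω | ∃ i : Fin n, (1 : ℝ) / 3 ≤ |XS i ⬝ᵥ ((XSᵀ * XS)⁻¹ *ᵥ (XSᵀ *ᵥ ε ω))|}).toReal
      ≤ 9 * (σ ^ 2 / Λmin) * ((s : ℝ) / n) * ⨆ i : Fin n, ∑ k, (XS i k) ^ 2 := by
  have hc : 0 < n * Λmin := by positivity
  have hcoer (v : Fin s → ℝ) : (n * Λmin) * ∑ k, v k ^ 2 ≤ v ⬝ᵥ ((XSᵀ * XS) *ᵥ v) :=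
    calc (n * Λmin) * ∑ k, v k ^ 2 = n * (Λmin * ∑ k, v k ^ 2) := mul_assoc _ _ _
      _ ≤ n * ((1 / n) * (v ⬝ᵥ ((XSᵀ * XS) *ᵥ v))) := by
        gcongr n * ?_
        simpa only [smul_mulVec, dotProduct_smul, smul_eq_mul] using heig v
      _ = v ⬝ᵥ ((XSᵀ * XS) *ᵥ v) := by field_simp
  have hlaw (i : Fin n) : HasLaw (fun ω => ε ω i) (gaussianReal 0 ⟨σ ^ 2, sq_nonneg σ⟩) P :=
    ⟨(hεmeas i).aemeasurable, hgauss i⟩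
  have hL2 (i : Fin n) := (hlaw i).memLp (memLp_id_gaussianReal 2)
  have hfit (ω : Ω) : (XSᵀ * XS)⁻¹ *ᵥ (XSᵀ *ᵥ ε ω) = ((XSᵀ * XS)⁻¹ * XSᵀ) *ᵥ ε ω :=
    mulVec_mulVec _ _ _
  have hmoment : ∫ ω, ∑ k, ((XSᵀ * XS)⁻¹ *ᵥ (XSᵀ *ᵥ ε ω)) k ^ 2 ∂P
      = σ ^ 2 * ((XSᵀ * XS)⁻¹).trace := by
    simp_rw [hfit]
    rw [integral_sum_mulVec_sq hL2 (fun i j hij => hindep.indepFun hij)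
      (fun i => (hlaw i).integral_eq.trans integral_id_gaussianReal)
      (fun i => (hlaw i).variance_eq.trans variance_id_gaussianReal),
      sum_sq_gram_inv_mul_transpose XS (isUnit_det_of_coercive hc hcoer)]
    rfl
  calc _ ≤ _ := measureReal_exists_le_abs_dotProduct_le XS
        (by simp_rw [hfit]; exact integrable_sum_mulVec_sq hL2 _) (by norm_num : (0 : ℝ) < 1 / 3)
    _ ≤ (⨆ i : Fin n, ∑ k, (XS i k) ^ 2) * (σ ^ 2 * (s / (n * Λmin))) / (1 / 3) ^ 2 := by
      rw [hmoment]
      gcongr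
      · exact Real.iSup_nonneg fun i => Finset.sum_nonneg fun k _ => sq_nonneg _
      · simpa using trace_inv_le_of_coercive hc hcoer
    _ = _ := by ring

/-- For a deterministic `n × s` matrix `X_S` of full column rank with rows
`x_{i,S}`, whose Gram matrix `C₁₁ = (1/n)X_SᵀX_S` has smallest eigenvalue at least
`Λ_min > 0`, and `ε` with i.i.d. `N(0,σ²)` entries,
`P(max_i |x_{i,S}ᵀ(X_SᵀX_S)⁻¹X_Sᵀε| ≥ 1/3) ≤ 9·(σ²/Λ_min)·(s/n)·max_i ‖x_{i,S}‖₂²`. -/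
theorem max_fitted_noise_prob_le
    {Ω : Type*} [MeasurableSpace Ω] (P : Measure Ω) [IsProbabilityMeasure P]
    {n s : ℕ} (hn : 0 < n)
    (XS : Matrix (Fin n) (Fin s) ℝ) (hrank : (XSᵀ * XS).PosDef)
    (Λmin : ℝ) (hΛ : 0 < Λmin)
    (heig : ∀ v : Fin s → ℝ,
      Λmin * ∑ k, (v k) ^ 2 ≤ v ⬝ᵥ (((1 / (n : ℝ)) • (XSᵀ * XS)) *ᵥ v))
    (σ : ℝ) (hσ : 0 < σ) (ε : Ω → Fin n → ℝ)
    (hεmeas : ∀ i, Measurable fun ω => ε ω i)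
    (hindep : iIndepFun (fun i ω => ε ω i) P)
    (hgauss : ∀ i, P.map (fun ω => ε ω i) = gaussianReal 0 ⟨σ ^ 2, sq_nonneg σ⟩) :
    (P {ω | ∃ i : Fin n, (1 : ℝ) / 3 ≤ |XS i ⬝ᵥ ((XSᵀ * XS)⁻¹ *ᵥ (XSᵀ *ᵥ ε ω))|}).toReal
      ≤ 9 * (σ ^ 2 / Λmin) * ((s : ℝ) / n) * ⨆ i : Fin n, ∑ k, (XS i k) ^ 2 :=
  max_fitted_noise_prob_le_general P hn XS Λmin hΛ heig σ ε hεmeas hindep hgauss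
end
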